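/- (Approximation bound for NN distance, Theorem 2.) Let P, Q be distributions on a finite set X × [m], C an invertible row-stochastic m×m matrix with corrupted distributions P̃, Q̃. Let F be a class of functions D : X → ℝ^m closed under the action D ↦ T·D for every matrix T with max-row-sum norm at most 1. Then d_F(P̃, Q̃) ≤ d_F(P, Q) ≤ ‖C⁻¹‖_∞ · d_F(P̃, Q̃), where d_F is the IPM sup_{D∈F}(E_P[D(x)_y] − E_Q[D(x)_y]). -/
import Mathlib


open Finset

/-- `P` is a probability distribution on `X × Fin m`. -/
def IsProbDist {X : Type*} [Fintype X] {m : ℕ} (P : X → Fin m → ℝ) : Prop :=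
  (∀ x y, 0 ≤ P x y) ∧ ∑ x, ∑ y, P x y = 1

/-- Corruption of the label through a noisy channel `C`. -/
noncomputable def corrupt {X : Type*} [Fintype X] {m : ℕ} (P : X → Fin m → ℝ)
    (C : Matrix (Fin m) (Fin m) ℝ) : X → Fin m → ℝ :=
  fun x yt => ∑ y, P x y * C y yt

/-- `C` is a row-stochastic matrix. -/
def RowStochastic {m : ℕ} (C : Matrix (Fin m) (Fin m) ℝ) : Prop :=
  (∀ i j, 0 ≤ C i j) ∧ ∀ i, ∑ j, C i j = 1

/-- Maximum absolute row sum norm `‖A‖_∞ = max_i ∑_j |A i j|`. -/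
noncomputable def maxRowSum {m : ℕ} (A : Matrix (Fin m) (Fin m) ℝ) : ℝ :=
  ⨆ i, ∑ j, |A i j|

/-- IPM neural network distance. -/
noncomputable def nnDist {X : Type*} [Fintype X] {m : ℕ}
    (F : Set (X → Fin m → ℝ)) (P Q : X → Fin m → ℝ) : ℝ :=
  sSup ((fun D => (∑ x, ∑ y, P x y * D x y) - ∑ x, ∑ y, Q x y * D x y) '' F)

section Aux

variable {X : Type*} [Fintype X] {m : ℕ}

/-- The payoff functional. -/
noncomputable def phiAux (P Q : X → Fin m → ℝ) (D : X → Fin m → ℝ) : ℝ :=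
  (∑ x, ∑ y, P x y * D x y) - ∑ x, ∑ y, Q x y * D x y

/-- Action of a matrix on a discriminator. -/
noncomputable def matApp (T : Matrix (Fin m) (Fin m) ℝ) (D : X → Fin m → ℝ) :
    X → Fin m → ℝ :=
  fun x y => ∑ j, T y j * D x j

lemma nnDist_eq_sSup_phiAux (F : Set (X → Fin m → ℝ)) (P Q : X → Fin m → ℝ) :
    nnDist F P Q = sSup (phiAux P Q '' F) := rfl

lemma sum_corrupt_mul (P : X → Fin m → ℝ) (C : Matrix (Fin m) (Fin m) ℝ)
    (D : X → Fin m → ℝ) :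
    ∑ x, ∑ y, corrupt P C x y * D x y = ∑ x, ∑ y, P x y * (matApp C D) x y := by
  refine Finset.sum_congr rfl fun x _ => ?_
  simp only [corrupt, matApp, Finset.sum_mul, Finset.mul_sum]
  rw [Finset.sum_comm]
  simp [mul_assoc]

lemma phiAux_corrupt (P Q : X → Fin m → ℝ) (C : Matrix (Fin m) (Fin m) ℝ)
    (D : X → Fin m → ℝ) :
    phiAux (corrupt P C) (corrupt Q C) D = phiAux P Q (matApp C D) := by
  simp only [phiAux, sum_corrupt_mul]

lemma matApp_matApp (A B : Matrix (Fin m) (Fin m) ℝ) (D : X → Fin m → ℝ) :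
    matApp A (matApp B D) = matApp (A * B) D := by
  funext x y
  simp only [matApp, Matrix.mul_apply, Finset.sum_mul, Finset.mul_sum]
  rw [Finset.sum_comm]
  simp [mul_assoc]

lemma maxRowSum_nonneg (A : Matrix (Fin m) (Fin m) ℝ) : 0 ≤ maxRowSum A :=
  Real.iSup_nonneg fun _ => Finset.sum_nonneg fun _ _ => abs_nonneg _

lemma row_le_maxRowSum (A : Matrix (Fin m) (Fin m) ℝ) (i : Fin m) :
    ∑ j, |A i j| ≤ maxRowSum A := by
  exact le_ciSup (f := fun i => ∑ j, |A i j|) (Set.Finite.bddAbove (Set.finite_range _)) i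

lemma maxRowSum_le (A : Matrix (Fin m) (Fin m) ℝ) {a : ℝ} (ha : 0 ≤ a)
    (h : ∀ i, ∑ j, |A i j| ≤ a) : maxRowSum A ≤ a :=
  Real.iSup_le h ha

end Aux

theorem nnDist_approximation_bounds {X : Type*} [Fintype X] {m : ℕ}
    (P Q : X → Fin m → ℝ) (hP : IsProbDist P) (hQ : IsProbDist Q)
    (C Cinv : Matrix (Fin m) (Fin m) ℝ) (hC : RowStochastic C)
    (hCinv₁ : C * Cinv = 1) (hCinv₂ : Cinv * C = 1)
    (F : Set (X → Fin m → ℝ))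
    (hF : ∀ T : Matrix (Fin m) (Fin m) ℝ, maxRowSum T ≤ 1 →
      ∀ D ∈ F, (fun x y => ∑ j, T y j * D x j) ∈ F) :
    nnDist F (corrupt P C) (corrupt Q C) ≤ nnDist F P Q ∧
    nnDist F P Q ≤ maxRowSum Cinv * nnDist F (corrupt P C) (corrupt Q C) := by
  classical
  have hF' : ∀ T : Matrix (Fin m) (Fin m) ℝ, maxRowSum T ≤ 1 →
      ∀ D ∈ F, matApp T D ∈ F := hF
  -- m = 0 is impossible
  rcases Nat.eq_zero_or_pos m with hm | hm
  · exfalso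
    have h1 := hP.2
    subst hm
    simp at h1
  -- trivial case F = ∅
  rcases Set.eq_empty_or_nonempty F with hFe | hFne
  · subst hFe
    simp [nnDist, Real.sSup_empty]
  -- notation
  set r : ℝ := maxRowSum Cinv with hr
  have hr0 : 0 ≤ r := maxRowSum_nonneg Cinv
  -- r > 0
  have hrpos : 0 < r := by
    have i0 : Fin m := ⟨0, hm⟩
    have h1 : ∑ j, Cinv i0 j * C j i0 = 1 := by
      have := congrArg (fun M => M i0 i0) hCinv₂
      simpa [Matrix.mul_apply, Matrix.one_apply] using this
    have hex : ∃ j, Cinv i0 j ≠ 0 := by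
      by_contra h
      push_neg at h
      simp [h] at h1
    obtain ⟨j0, hj0⟩ := hex
    have h2 : 0 < ∑ j, |Cinv i0 j| :=
      Finset.sum_pos' (fun j _ => abs_nonneg _)
        ⟨j0, Finset.mem_univ _, abs_pos.mpr hj0⟩
    exact lt_of_lt_of_le h2 (row_le_maxRowSum Cinv i0)
  -- maxRowSum C ≤ 1
  have hCnorm : maxRowSum C ≤ 1 := by
    refine maxRowSum_le C zero_le_one fun i => ?_
    have : ∑ j, |C i j| = ∑ j, C i j :=
      Finset.sum_congr rfl fun j _ => abs_of_nonneg (hC.1 i j)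
    rw [this, hC.2 i]
  -- the scaled inverse has norm ≤ 1
  have hTnorm : maxRowSum (r⁻¹ • Cinv) ≤ 1 := by
    refine maxRowSum_le _ zero_le_one fun i => ?_
    have : ∑ j, |(r⁻¹ • Cinv) i j| = r⁻¹ * ∑ j, |Cinv i j| := by
      rw [Finset.mul_sum]
      refine Finset.sum_congr rfl fun j _ => ?_
      simp [Matrix.smul_apply, abs_mul, abs_of_nonneg (inv_nonneg.mpr hr0)]
    rw [this]
    rw [inv_mul_le_iff₀ hrpos, mul_one]
    exact row_le_maxRowSum Cinv i
  set S : Set ℝ := phiAux P Q '' F with hS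
  set St : Set ℝ := phiAux (corrupt P C) (corrupt Q C) '' F with hSt
  have hSne : S.Nonempty := hFne.image _
  have hStne : St.Nonempty := hFne.image _
  -- St ⊆ S
  have hsub : St ⊆ S := by
    rintro s ⟨D, hD, rfl⟩
    exact ⟨matApp C D, hF' C hCnorm D hD, (phiAux_corrupt P Q C D).symm⟩
  -- every element of S is r times an element of St
  have hkey : ∀ s ∈ S, ∃ t ∈ St, s = r * t := by
    rintro s ⟨D, hD, rfl⟩
    set E := matApp (r⁻¹ • Cinv) D with hE
    have hEF : E ∈ F := hF' _ hTnorm D hD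
    refine ⟨phiAux (corrupt P C) (corrupt Q C) E, ⟨E, hEF, rfl⟩, ?_⟩
    have hCE : matApp C E = fun x y => r⁻¹ * D x y := by
      rw [hE, matApp_matApp]
      have : C * (r⁻¹ • Cinv) = r⁻¹ • (1 : Matrix (Fin m) (Fin m) ℝ) := by
        rw [Matrix.mul_smul, hCinv₁]
      rw [this]
      funext x y
      simp [matApp, Matrix.smul_apply, Matrix.one_apply, Finset.mul_sum,
        mul_ite, Finset.sum_ite_eq', mul_comm]
    rw [phiAux_corrupt, hCE]
    simp only [phiAux]
    have key : ∀ (R : X → Fin m → ℝ),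
        ∑ x, ∑ y, R x y * (r⁻¹ * D x y) = r⁻¹ * ∑ x, ∑ y, R x y * D x y := by
      intro R
      rw [Finset.mul_sum]
      refine Finset.sum_congr rfl fun x _ => ?_
      rw [Finset.mul_sum]
      exact Finset.sum_congr rfl fun y _ => by ring
    rw [key, key, ← mul_sub, ← mul_assoc, mul_inv_cancel₀ (ne_of_gt hrpos), one_mul]
  -- bddAbove transfer
  have hbdd_iff : BddAbove S ↔ BddAbove St := by
    constructor
    · exact fun h => h.mono hsub
    · rintro ⟨M, hM⟩
      refine ⟨r * M, ?_⟩
      rintro s hs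
      obtain ⟨t, ht, rfl⟩ := hkey s hs
      exact mul_le_mul_of_nonneg_left (hM ht) hr0
  rw [nnDist_eq_sSup_phiAux, nnDist_eq_sSup_phiAux, ← hS, ← hSt]
  by_cases hB : BddAbove S
  · have hBt : BddAbove St := hbdd_iff.mp hB
    constructor
    · exact csSup_le_csSup hB hStne hsub
    · refine csSup_le hSne fun s hs => ?_
      obtain ⟨t, ht, rfl⟩ := hkey s hs
      exact mul_le_mul_of_nonneg_left (le_csSup hBt ht) hr0
  · have hBt : ¬ BddAbove St := fun h => hB (hbdd_iff.mpr h)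
    rw [Real.sSup_of_not_bddAbove hB, Real.sSup_of_not_bddAbove hBt]
    simp
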